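/- Let K be a commutative ring with unity, a, b two distinct letters, u a word over {a, b}, and k, l nonnegative integers. Then λ(a^k b u b a^l) = (−1)^{k+1} Σ_{i=0}^{l} C(k+i, i) λ(u b a^{l−i}) · b a^{k+i} + Σ_{j=0}^{k} (−1)^j C(l+j, j) λ(a^{k−j} b u) · b a^{l+j}, where the products are concatenation products in K⟨{a,b}⟩ and C(·,·) are binomial coefficients. -/

import Mathlib

open scoped BigOperators
open Classical

noncomputable section

attribute [local instance] LieRing.ofAssociativeRing

/-- The free associative algebra `K⟨A⟩` on the alphabet `A`, realized as the monoid algebra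
of the free monoid on `A`. -/
abbrev NC (K A : Type*) [CommRing K] : Type _ := MonoidAlgebra K (FreeMonoid A)

variable (K A : Type*) [CommRing K]

/-- The monomial (word) `w` viewed as an element of `K⟨A⟩`. -/
def wp (w : List A) : NC K A := MonoidAlgebra.single (FreeMonoid.ofList w) 1

/-- The coefficient `(P, w)` of the word `w` in the polynomial `P`. -/
def coeffW (P : NC K A) (w : List A) : K := P.coeff (FreeMonoid.ofList w)

/-- The canonical scalar product `(P, Q) = ∑_w (P, w)(Q, w)` on `K⟨A⟩`. -/
def sp (P Q : NC K A) : K := Finsupp.sum P.coeff fun w c => c * Q.coeff w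

/-- The free Lie algebra `L_K(A)`: the Lie subalgebra of `K⟨A⟩` (with the commutator
bracket) generated by the letters. -/
def freeLie : LieSubalgebra K (NC K A) :=
  LieSubalgebra.lieSpan K (NC K A) (Set.range fun a : A => wp K A [a])

/-- The adjoint `λ` of the left-normed Lie bracketing, on words:
`λ(ε) = 0`, `λ(a) = a`, `λ(aub) = λ(au)b − λ(ub)a`. -/
def lam : List A → NC K A
  | [] => 0
  | [a] => wp K A [a]
  | a :: b :: t =>
      lam (a :: (b :: t).dropLast) * wp K A [(b :: t).getLast (by simp)] -
        lam (b :: t) * wp K A [a]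
  termination_by w => w.length
  decreasing_by
    all_goals simp [List.length_dropLast]

/-- `λ` extended linearly to the whole of `K⟨A⟩`. -/
def lamLin : NC K A →ₗ[K] NC K A :=
  (Finsupp.linearCombination K fun w : FreeMonoid A => lam K A (FreeMonoid.toList w)) ∘ₗ
    (MonoidAlgebra.coeffLinearEquiv (R := K) (S := K) (M := FreeMonoid A)).toLinearMap

/-- The shuffle product of two words, as an element of `K⟨A⟩`. -/
def shuffleW : List A → List A → NC K A
  | [], v => wp K A v
  | u, [] => wp K A u
  | a :: u, b :: v =>
      wp K A [a] * shuffleW u (b :: v) + wp K A [b] * shuffleW (a :: u) v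
  termination_by u v => u.length + v.length
  decreasing_by
    all_goals simp [Nat.lt_succ_iff]

/-- The shuffle product on `K⟨A⟩`, extended bilinearly. -/
def sh (P Q : NC K A) : NC K A :=
  Finsupp.sum P.coeff fun u cu =>
    Finsupp.sum Q.coeff fun v cv =>
      (cu * cv) • shuffleW K A (FreeMonoid.toList u) (FreeMonoid.toList v)

/-- The right residual `P ▷ q` of `P` by a word `q`: `(P ▷ q, w) = (P, qw)`. -/
def rresW (P : NC K A) (q : List A) : NC K A :=
  Finsupp.sum P.coeff fun u c =>
    if q <+: FreeMonoid.toList u then c • wp K A ((FreeMonoid.toList u).drop q.length) else 0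

/-- The right residual `P ▷ Q`: `(P ▷ Q, w) = (P, Qw)`. -/
def rres (P Q : NC K A) : NC K A :=
  Finsupp.sum Q.coeff fun v c => c • rresW K A P (FreeMonoid.toList v)

/-- Auxiliary left residual by a word `q`: `(q ◁ P, w) = (P, wq)`. -/
def lresW (P : NC K A) (q : List A) : NC K A :=
  Finsupp.sum P.coeff fun u c =>
    if q <:+ FreeMonoid.toList u then
      c • wp K A ((FreeMonoid.toList u).take ((FreeMonoid.toList u).length - q.length))
    else 0

/-- The left residual `Q ◁ P`: `(Q ◁ P, w) = (P, wQ)`. -/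
def lres (Q P : NC K A) : NC K A :=
  Finsupp.sum Q.coeff fun v c => c • lresW K A P (FreeMonoid.toList v)

/-- The number of trailing occurrences of the letter `a` in the word `v`. -/
def trailCount (a : A) (v : FreeMonoid A) : ℕ :=
  ((FreeMonoid.toList v).reverse.takeWhile fun x => decide (x = a)).length

/-- `d(P)`: the least number of trailing `a`'s among the words in the support of `P`. -/
def dP (a : A) (P : NC K A) : ℕ :=
  sInf {n : ℕ | ∃ v ∈ Finsupp.support P.coeff, trailCount A a v = n}

/-- `e(P)`: the largest number of trailing `a`'s among the words in the support of `P`. -/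
def eP (a : A) (P : NC K A) : ℕ :=
  Finset.sup (Finsupp.support P.coeff) (trailCount A a)

/-- The polynomial `P_i` in the decomposition `P = ∑ P_i b a^i`: it collects (and strips
the suffix `b a^i` from) the monomials of `P` with exactly `i` trailing `a`'s. -/
def partBA (a b : A) (i : ℕ) (P : NC K A) : NC K A :=
  Finsupp.sum P.coeff fun v c =>
    if (FreeMonoid.toList v).reverse.take (i + 1) = List.replicate i a ++ [b] then
      c • wp K A ((FreeMonoid.toList v).take ((FreeMonoid.toList v).length - (i + 1)))
    else 0

/-- A word is Lyndon if it is nonempty and strictly smaller, in the lexicographic order,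
than each of its proper nonempty right factors. -/
def IsLyndon {A : Type*} [LinearOrder A] (w : List A) : Prop :=
  w ≠ [] ∧ ∀ s t : List A, w = t ++ s → t ≠ [] → s ≠ [] → List.Lex (· < ·) w s

/-- `γ(w)`: the nonnegative generator of the ideal `{(P, w) : P ∈ L_ℤ(A)}` of `ℤ`. -/
def gammaW (A : Type*) (w : List A) : ℤ :=
  haveI : (Ideal.span {c : ℤ | ∃ P ∈ freeLie ℤ A, coeffW ℤ A P w = c}).IsPrincipal :=
    IsPrincipalIdealRing.principal _
  (Submodule.IsPrincipal.generator
    (Ideal.span {c : ℤ | ∃ P ∈ freeLie ℤ A, coeffW ℤ A P w = c})).natAbs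

end

/-! Peeling off the first and the last letter with `λ(xvy) = λ(xv)y − λ(vy)x` shows that
`F k l = λ(a^k b u b a^l)` satisfies `F (k+1) (l+1) = (F (k+1) l − F k (l+1)) a`, together with
boundary recursions at `k = 0` and `l = 0` into which the terms `λ(u b a^i) b` and `λ(a^j b u) b`
enter. These recursions determine `F`, and the right-hand side satisfies them because its
coefficients obey Pascal's rule. -/

section Pascal

variable {K M : Type*} [CommRing K] [AddCommGroup M] [Module K M] (f : Module.End K M)

def pascalSum (c : K) (r : ℕ → M) (k l : ℕ) : M :=
  ∑ i ∈ Finset.range (l + 1), (c ^ i * ((k + i).choose i : K)) • (f ^ (k + i)) (r (l - i))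

lemma pascalSum_zero_right (c : K) (r : ℕ → M) (k : ℕ) :
    pascalSum f c r k 0 = (f ^ k) (r 0) := by
  simp [pascalSum]

lemma pascalSum_zero_succ (c : K) (r : ℕ → M) (l : ℕ) :
    pascalSum f c r 0 (l + 1) = r (l + 1) + c • f (pascalSum f c r 0 l) := by
  rw [pascalSum, Finset.sum_range_succ', add_comm, pascalSum, map_sum, Finset.smul_sum]
  congr 1
  · simp
  · refine Finset.sum_congr rfl fun i _ => ?_
    have hl : l + 1 - (i + 1) = l - i := by omega
    simp only [Nat.choose_self, zero_add, hl, map_smul, smul_smul, pow_succ', mul_assoc,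
      Module.End.mul_apply]

lemma pascalSum_succ_succ (c : K) (r : ℕ → M) (k l : ℕ) :
    pascalSum f c r (k + 1) (l + 1) =
      f (pascalSum f c r k (l + 1)) + c • f (pascalSum f c r (k + 1) l) := by
  rw [pascalSum, pascalSum, pascalSum, Finset.sum_range_succ' _ (l + 1),
    Finset.sum_range_succ' _ (l + 1)]
  simp only [add_zero, map_add, map_sum, map_smul, Finset.smul_sum, smul_smul]
  conv_rhs => rw [add_right_comm, ← Finset.sum_add_distrib]
  congr 1
  · refine Finset.sum_congr rfl fun i _ => ?_
    have hl : l + 1 - (i + 1) = l - i := by omega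
    have hk : k + (i + 1) = k + 1 + i := by omega
    rw [hl, hk, ← Module.End.mul_apply, ← pow_succ', ← add_smul,
      show k + 1 + (i + 1) = k + 1 + i + 1 by omega, Nat.choose_succ_succ', pow_succ']
    push_cast
    congr 1
    noncomm_ring
  · simp [pow_succ']

variable (p q : ℕ → M)

def pascalForm (k l : ℕ) : M :=
  (-1 : K) ^ (k + 1) • pascalSum f 1 p k l + pascalSum f (-1) q l k

lemma pascalForm_zero_zero : pascalForm f p q 0 0 = q 0 - p 0 := by
  simp [pascalForm, pascalSum_zero_right, sub_eq_neg_add]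

lemma pascalForm_zero_succ (l : ℕ) :
    pascalForm f p q 0 (l + 1) = f (pascalForm f p q 0 l) - p (l + 1) := by
  simp only [pascalForm, pascalSum_zero_succ, pascalSum_zero_right, map_add, map_smul,
    pow_succ', Module.End.mul_apply]
  module

lemma pascalForm_succ_zero (k : ℕ) :
    pascalForm f p q (k + 1) 0 = q (k + 1) - f (pascalForm f p q k 0) := by
  simp only [pascalForm, pascalSum_zero_succ, pascalSum_zero_right, map_add, map_smul,
    pow_succ', Module.End.mul_apply]
  module

lemma pascalForm_succ_succ (k l : ℕ) :
    pascalForm f p q (k + 1) (l + 1) =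
      f (pascalForm f p q (k + 1) l - pascalForm f p q k (l + 1)) := by
  simp only [pascalForm, pascalSum_succ_succ, map_add, map_sub, map_smul]
  module

theorem eq_pascalForm (F : ℕ → ℕ → M) (h00 : F 0 0 = q 0 - p 0)
    (h0s : ∀ l, F 0 (l + 1) = f (F 0 l) - p (l + 1))
    (hs0 : ∀ k, F (k + 1) 0 = q (k + 1) - f (F k 0))
    (hss : ∀ k l, F (k + 1) (l + 1) = f (F (k + 1) l - F k (l + 1))) (k l : ℕ) :
    F k l = pascalForm f p q k l := by
  induction k generalizing l with
  | zero =>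
    induction l with
    | zero => rw [h00, pascalForm_zero_zero]
    | succ l ih => rw [h0s, ih, pascalForm_zero_succ]
  | succ k ihk =>
    induction l with
    | zero => rw [hs0, ihk, pascalForm_succ_zero]
    | succ l ihl => rw [hss, ihl, ihk, pascalForm_succ_succ]

end Pascal

section Lam

variable {K A : Type*} [CommRing K]

lemma wp_append (v w : List A) : wp K A (v ++ w) = wp K A v * wp K A w := by
  simp [wp, MonoidAlgebra.single_mul_single]

lemma wp_replicate (x : A) (n : ℕ) : wp K A (List.replicate n x) = wp K A [x] ^ n := by
  induction n with
  | zero => rfl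
  | succ n ih => rw [List.replicate_succ', wp_append, ih, pow_succ]

lemma lam_cons_concat (x y : A) (v : List A) :
    lam K A (x :: v ++ [y]) =
      lam K A (x :: v) * wp K A [y] - lam K A (v ++ [y]) * wp K A [x] := by
  have h (t : List A) (ht : t ≠ []) : lam K A (x :: t) =
      lam K A (x :: t.dropLast) * wp K A [t.getLast ht] - lam K A t * wp K A [x] := by
    cases t with
    | nil => contradiction
    | cons c t => rw [lam]
  simpa using h (v ++ [y]) (by simp)

end Lam

theorem lam_pascal_recursion_general
    (K A : Type*) [CommRing K] (a b : A)
    (u : List A) (k l : ℕ) :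
    lam K A (List.replicate k a ++ b :: (u ++ b :: List.replicate l a)) =
      (-1 : K) ^ (k + 1) •
        (∑ i ∈ Finset.range (l + 1),
          (Nat.choose (k + i) i : K) •
            (lam K A (u ++ b :: List.replicate (l - i) a) *
              wp K A (b :: List.replicate (k + i) a))) +
      ∑ j ∈ Finset.range (k + 1),
        ((-1 : K) ^ j * (Nat.choose (l + j) j : K)) •
          (lam K A (List.replicate (k - j) a ++ b :: u) *
            wp K A (b :: List.replicate (l + j) a)) := by
  have hw : ∀ n, wp K A (b :: List.replicate n a) = wp K A [b] * wp K A [a] ^ n := fun n => by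
    rw [← wp_replicate, ← wp_append, List.singleton_append]
  refine (eq_pascalForm (LinearMap.mulRight K (wp K A [a]))
    (fun i => lam K A (u ++ b :: List.replicate i a) * wp K A [b])
    (fun j => lam K A (List.replicate j a ++ b :: u) * wp K A [b])
    (fun k l => lam K A (List.replicate k a ++ b :: (u ++ b :: List.replicate l a)))
    ?_ ?_ ?_ ?_ k l).trans ?_
  · simpa using lam_cons_concat (K := K) b b u
  · intro l
    simpa [List.replicate_succ'] using lam_cons_concat (K := K) b a (u ++ b :: List.replicate l a)
  · intro k
    simpa [List.replicate_succ] using lam_cons_concat (K := K) a b (List.replicate k a ++ b :: u)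
  · intro k l
    have hrep : List.replicate l a ++ [a] = a :: List.replicate l a := by
      rw [← List.replicate_succ', List.replicate_succ]
    simpa [List.replicate_succ, hrep, sub_mul] using
      lam_cons_concat (K := K) a a (List.replicate k a ++ b :: (u ++ b :: List.replicate l a))
  · simp only [pascalForm, pascalSum, LinearMap.pow_mulRight, LinearMap.mulRight_apply, hw,
      mul_assoc, one_pow, one_mul]

theorem lam_pascal_recursion
    (K A : Type*) [CommRing K] (a b : A) (hab : a ≠ b)
    (u : List A) (hu : ∀ c ∈ u, c = a ∨ c = b) (k l : ℕ) :
    lam K A (List.replicate k a ++ b :: (u ++ b :: List.replicate l a)) =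
      (-1 : K) ^ (k + 1) •
        (∑ i ∈ Finset.range (l + 1),
          (Nat.choose (k + i) i : K) •
            (lam K A (u ++ b :: List.replicate (l - i) a) *
              wp K A (b :: List.replicate (k + i) a))) +
      ∑ j ∈ Finset.range (k + 1),
        ((-1 : K) ^ j * (Nat.choose (l + j) j : K)) •
          (lam K A (List.replicate (k - j) a ++ b :: u) *
            wp K A (b :: List.replicate (l + j) a)) :=
  lam_pascal_recursion_general K A a b u k l
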